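/- Let A, B, C ∈ 𝔰𝔩(4,ℝ) be pairwise-commuting, and let T be a full torsion tensor of (𝔤_{A,B,C}, φ), i.e., a linear map T : ℝ⁷ → ℝ⁷ with ∇_X φ = ι_{T(X)}ψ for all X. Then ∑_{i=1}^{7} T(∇_{e_i} e_i, e_j) = 0 for every j ∈ {1,…,7}, and for j ∈ {1,2,7} the divergence of T satisfies ⟨div T, e_j⟩ = ∑_{i=3}^{6} T(e_i, S(Dʲ) e_i), where D¹ := B, D² := C, D⁷ := A and S(M) := (M + Mᵀ)/2. -/

import Mathlib

open Matrix

noncomputable section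

/-- Standard basis vector `e_{i+1}` of `ℝ⁷` (index `0 ↔ e₁`, …, `6 ↔ e₇`). -/
def E (i : Fin 7) : Fin 7 → ℝ := Pi.single i 1

/-- The standard inner product on `ℝ⁷` for which `e₁, …, e₇` is orthonormal. -/
def inner7 (X Y : Fin 7 → ℝ) : ℝ := ∑ i, X i * Y i

/-- The component of `X ∈ ℝ⁷` in `𝔫 = span{e₃,e₄,e₅,e₆} ≅ ℝ⁴`. -/
def nPart (X : Fin 7 → ℝ) : Fin 4 → ℝ := fun i => X ⟨i.val + 2, by omega⟩

/-- The inclusion `ℝ⁴ ≅ 𝔫 = span{e₃,e₄,e₅,e₆} ⊆ ℝ⁷`. -/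
def emb (w : Fin 4 → ℝ) : Fin 7 → ℝ :=
  fun j => if h : 2 ≤ j.val ∧ j.val ≤ 5 then w ⟨j.val - 2, by omega⟩ else 0

/-- For `X = λ₁e₁ + λ₂e₂ + λ₇e₇ (+ 𝔫-part)`, the matrix `M_X = λ₁B + λ₂C + λ₇A`. -/
def MX (A B C : Matrix (Fin 4) (Fin 4) ℝ) (X : Fin 7 → ℝ) : Matrix (Fin 4) (Fin 4) ℝ :=
  X 0 • B + X 1 • C + X 6 • A

/-- The bilinear antisymmetric bracket on `ℝ⁷` determined by `[𝔞,𝔞] = 0`, `[𝔫,𝔫] = 0`,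
`[e₇,v] = Av`, `[e₁,v] = Bv`, `[e₂,v] = Cv` for `v ∈ 𝔫` and `[v,eₖ] = −[eₖ,v]`,
where `𝔞 = span{e₁,e₂,e₇}` and `𝔫 = span{e₃,e₄,e₅,e₆}`. -/
def bracket (A B C : Matrix (Fin 4) (Fin 4) ℝ) (X Y : Fin 7 → ℝ) : Fin 7 → ℝ :=
  emb ((MX A B C X).mulVec (nPart Y) - (MX A B C Y).mulVec (nPart X))

/-- The symmetric part `S(M) = (M + Mᵀ)/2` of a matrix. -/
def symPart (M : Matrix (Fin 4) (Fin 4) ℝ) : Matrix (Fin 4) (Fin 4) ℝ :=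
  (1/2 : ℝ) • (M + Mᵀ)

/-- The antisymmetric part `A(M) = (M − Mᵀ)/2` of a matrix. -/
def skewPart (M : Matrix (Fin 4) (Fin 4) ℝ) : Matrix (Fin 4) (Fin 4) ℝ :=
  (1/2 : ℝ) • (M - Mᵀ)

/-- `𝔞 = span{e₁,e₂,e₇} ⊆ ℝ⁷`. -/
def aSub : Submodule ℝ (Fin 7 → ℝ) := Submodule.span ℝ {E 0, E 1, E 6}

/-- `𝔫 = span{e₃,e₄,e₅,e₆} ⊆ ℝ⁷`. -/
def nSub : Submodule ℝ (Fin 7 → ℝ) := Submodule.span ℝ {E 2, E 3, E 4, E 5}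

/-- `∇` satisfies the Koszul formula
`⟨∇_X Y, Z⟩ = ½(⟨[X,Y],Z⟩ − ⟨[Y,Z],X⟩ + ⟨[Z,X],Y⟩)`. -/
def IsKoszul (A B C : Matrix (Fin 4) (Fin 4) ℝ)
    (nabla : (Fin 7 → ℝ) → (Fin 7 → ℝ) → (Fin 7 → ℝ)) : Prop :=
  ∀ X Y Z, inner7 (nabla X Y) Z =
    (1/2 : ℝ) * (inner7 (bracket A B C X Y) Z - inner7 (bracket A B C Y Z) X
      + inner7 (bracket A B C Z X) Y)

/-- The wedge `e^{(i+1)(j+1)(k+1)}` of dual basis elements of `(ℝ⁷)*`, as a 3-form. -/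
def w3 (i j k : Fin 7) (X Y Z : Fin 7 → ℝ) : ℝ :=
  Matrix.det !![X i, X j, X k; Y i, Y j, Y k; Z i, Z j, Z k]

/-- The wedge `e^{(i+1)(j+1)(k+1)(l+1)}` of dual basis elements of `(ℝ⁷)*`, as a 4-form. -/
def w4 (i j k l : Fin 7) (X Y Z W : Fin 7 → ℝ) : ℝ :=
  Matrix.det !![X i, X j, X k, X l; Y i, Y j, Y k, Y l; Z i, Z j, Z k, Z l;
    W i, W j, W k, W l]

/-- The `G₂`-structure 3-form `φ = e¹²⁷ + e³⁴⁷ + e⁵⁶⁷ + e¹³⁵ − e¹⁴⁶ − e²³⁶ − e²⁴⁵`. -/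
def phi (X Y Z : Fin 7 → ℝ) : ℝ :=
  w3 0 1 6 X Y Z + w3 2 3 6 X Y Z + w3 4 5 6 X Y Z + w3 0 2 4 X Y Z
    - w3 0 3 5 X Y Z - w3 1 2 5 X Y Z - w3 1 3 4 X Y Z

/-- The dual 4-form `ψ = e³⁴⁵⁶ + e¹²⁵⁶ + e¹²³⁴ − e²⁴⁶⁷ + e²³⁵⁷ + e¹⁴⁵⁷ + e¹³⁶⁷`. -/
def psi (X Y Z W : Fin 7 → ℝ) : ℝ :=
  w4 2 3 4 5 X Y Z W + w4 0 1 4 5 X Y Z W + w4 0 1 2 3 X Y Z W - w4 1 3 5 6 X Y Z W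
    + w4 1 2 4 6 X Y Z W + w4 0 3 4 6 X Y Z W + w4 0 2 5 6 X Y Z W

/-- `T : ℝ⁷ → ℝ⁷` is a full torsion tensor of `(𝔤_{A,B,C}, φ)`: `∇_X φ = ι_{T(X)} ψ`
for all `X`, where `(∇_X φ)(Y,Z,W) = −φ(∇_X Y,Z,W) − φ(Y,∇_X Z,W) − φ(Y,Z,∇_X W)`
and `(ι_V ψ)(Y,Z,W) = ψ(V,Y,Z,W)`. -/
def IsFullTorsion (nabla : (Fin 7 → ℝ) → (Fin 7 → ℝ) → (Fin 7 → ℝ))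
    (T : (Fin 7 → ℝ) → (Fin 7 → ℝ)) : Prop :=
  ∀ X Y Z W, -phi (nabla X Y) Z W - phi Y (nabla X Z) W - phi Y Z (nabla X W)
    = psi (T X) Y Z W

/-- `T(X,Y) := ⟨T(X),Y⟩`. -/
def Tbil (T : (Fin 7 → ℝ) → (Fin 7 → ℝ)) (X Y : Fin 7 → ℝ) : ℝ := inner7 (T X) Y

/-- The divergence of `T`, determined by
`⟨div T, e_j⟩ = −∑ᵢ T(∇_{e_i}e_i, e_j) − ∑ᵢ T(e_i, ∇_{e_i}e_j)`. -/
def divT (nabla : (Fin 7 → ℝ) → (Fin 7 → ℝ) → (Fin 7 → ℝ))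
    (T : (Fin 7 → ℝ) → (Fin 7 → ℝ)) : Fin 7 → ℝ :=
  fun j => -∑ i, Tbil T (nabla (E i) (E i)) (E j) - ∑ i, Tbil T (E i) (nabla (E i) (E j))

end

/-!
Write `𝔞 = span{e₁,e₂,e₇}` and `M_Z` for the matrix by which `Z` acts on `𝔫`. The Koszul formula
gives `⟨∇_{eᵢ}eᵢ, Z⟩ = ⟨[Z,eᵢ],eᵢ⟩`, so `∑ᵢ ∇_{eᵢ}eᵢ` pairs with `Z` to `tr ad_Z = tr M_Z`, which
vanishes because `A`, `B`, `C` are traceless. A full torsion tensor is additive, although this is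
not assumed: `ψ(V,·,·,·)` determines `V`, and `∇_X φ` is additive in `X`. Hence
`∑ᵢ T(∇_{eᵢ}eᵢ) = T 0 = 0`. For `eⱼ ∈ 𝔞` the Koszul formula gives `∇_{eᵢ}eⱼ = 0` for `eᵢ ∈ 𝔞` and
`∇_v eⱼ = −S(Dʲ)v` for `v ∈ 𝔫`, which turns the definition of `div T` into the stated formula.
-/

open Matrix

lemma inner7_eq_dotProduct (X Y : Fin 7 → ℝ) : inner7 X Y = X ⬝ᵥ Y := rfl

lemma inner7_E (X : Fin 7 → ℝ) (j : Fin 7) : inner7 X (E j) = X j := by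
  rw [inner7_eq_dotProduct, E, dotProduct_single, mul_one]

lemma inner7_add_left (X X' Z : Fin 7 → ℝ) : inner7 (X + X') Z = inner7 X Z + inner7 X' Z :=
  add_dotProduct X X' Z

lemma ext_inner7 {X X' : Fin 7 → ℝ} (h : ∀ Z, inner7 X Z = inner7 X' Z) : X = X' :=
  funext fun j => by simpa only [inner7_E] using h (E j)

lemma inner7_emb_left (w : Fin 4 → ℝ) (X : Fin 7 → ℝ) : inner7 (emb w) X = w ⬝ᵥ nPart X := by
  simp [inner7, emb, nPart, dotProduct, Fin.sum_univ_succ]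

lemma nPart_emb (w : Fin 4 → ℝ) : nPart (emb w) = w := by
  funext k; simp [nPart, emb, k.is_le]

lemma nPart_add (X X' : Fin 7 → ℝ) : nPart (X + X') = nPart X + nPart X' := rfl

lemma nPart_E_eq_zero {j : Fin 7} (hj : j.val < 2 ∨ j.val = 6) : nPart (E j) = 0 := by
  funext k
  simp only [nPart, E, Pi.single_apply, Fin.ext_iff, Pi.zero_apply, ite_eq_right_iff]
  omega

lemma emb_single (k : Fin 4) : emb (Pi.single k 1) = E ⟨k + 2, by omega⟩ := by
  funext j; fin_cases k <;> fin_cases j <;> rfl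

lemma sum_E_eq_add_sum_emb {M : Type*} [AddCommMonoid M] (f : (Fin 7 → ℝ) → M) :
    ∑ i, f (E i) = f (E 0) + f (E 1) + f (E 6) + ∑ k : Fin 4, f (emb (Pi.single k 1)) := by
  rw [Fin.sum_univ_seven, Fin.sum_univ_four, emb_single, emb_single, emb_single, emb_single]
  show _ = f (E 0) + f (E 1) + f (E 6) + (f (E 2) + f (E 3) + f (E 4) + f (E 5))
  abel

section Connection

variable {A B C : Matrix (Fin 4) (Fin 4) ℝ}

lemma MX_add (X X' : Fin 7 → ℝ) : MX A B C (X + X') = MX A B C X + MX A B C X' := by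
  simp only [MX, Pi.add_apply, add_smul]; abel

lemma MX_emb (w : Fin 4 → ℝ) : MX A B C (emb w) = 0 := by
  simp [MX, emb]

lemma trace_MX (X : Fin 7 → ℝ) :
    trace (MX A B C X) = X 0 * trace B + X 1 * trace C + X 6 * trace A := by
  simp [MX, trace_add, trace_smul]

variable {nabla : (Fin 7 → ℝ) → (Fin 7 → ℝ) → (Fin 7 → ℝ)}

lemma IsKoszul.inner_eq (hK : IsKoszul A B C nabla) (X Y Z : Fin 7 → ℝ) :
    inner7 (nabla X Y) Z = (1/2 : ℝ) *
      ((MX A B C X *ᵥ nPart Y - MX A B C Y *ᵥ nPart X) ⬝ᵥ nPart Z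
        - (MX A B C Y *ᵥ nPart Z - MX A B C Z *ᵥ nPart Y) ⬝ᵥ nPart X
        + (MX A B C Z *ᵥ nPart X - MX A B C X *ᵥ nPart Z) ⬝ᵥ nPart Y) := by
  rw [hK]; simp only [bracket, inner7_emb_left]

lemma IsKoszul.add_left (hK : IsKoszul A B C nabla) (X X' Y : Fin 7 → ℝ) :
    nabla (X + X') Y = nabla X Y + nabla X' Y :=
  ext_inner7 fun Z => by
    simp only [inner7_add_left, hK.inner_eq, nPart_add, MX_add, add_mulVec, mulVec_add,
      add_dotProduct, dotProduct_add, sub_dotProduct]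
    ring

lemma IsKoszul.eq_zero_of_nPart (hK : IsKoszul A B C nabla) {X Y : Fin 7 → ℝ}
    (hX : nPart X = 0) (hY : nPart Y = 0) : nabla X Y = 0 :=
  ext_inner7 fun Z => by rw [hK.inner_eq, hX, hY]; simp [inner7]

lemma IsKoszul.emb_left (hK : IsKoszul A B C nabla) (w : Fin 4 → ℝ) {Y : Fin 7 → ℝ}
    (hY : nPart Y = 0) :
    nabla (emb w) Y = -emb (symPart (MX A B C Y) *ᵥ w) :=
  ext_inner7 fun Z => by
    rw [hK.inner_eq, inner7_eq_dotProduct, neg_dotProduct, ← inner7_eq_dotProduct,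
      inner7_emb_left, nPart_emb, MX_emb, hY]
    simp only [symPart, smul_mulVec, add_mulVec, mulVec_transpose, ← dotProduct_mulVec,
      smul_dotProduct, add_dotProduct, zero_mulVec, mulVec_zero, sub_zero, zero_sub,
      dotProduct_zero, neg_dotProduct, smul_eq_mul]
    rw [dotProduct_comm (MX A B C Y *ᵥ nPart Z)]
    ring

lemma IsKoszul.inner_emb_self (hK : IsKoszul A B C nabla) (w : Fin 4 → ℝ) (Z : Fin 7 → ℝ) :
    inner7 (nabla (emb w) (emb w)) Z = (MX A B C Z *ᵥ w) ⬝ᵥ w := by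
  simp only [hK.inner_eq, nPart_emb, MX_emb, zero_mulVec, sub_zero, zero_sub, sub_self,
    zero_dotProduct, neg_dotProduct]
  ring

lemma IsKoszul.sum_nabla_E_self_eq_zero (hK : IsKoszul A B C nabla)
    (htA : trace A = 0) (htB : trace B = 0) (htC : trace C = 0) :
    ∑ i, nabla (E i) (E i) = 0 :=
  ext_inner7 fun Z => by
    rw [inner7_eq_dotProduct, sum_dotProduct]
    simp only [← inner7_eq_dotProduct]
    rw [sum_E_eq_add_sum_emb fun X => inner7 (nabla X X) Z]
    have h_a : ∀ j : Fin 7, j.val < 2 ∨ j.val = 6 → nabla (E j) (E j) = 0 := fun j hj =>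
      hK.eq_zero_of_nPart (nPart_E_eq_zero hj) (nPart_E_eq_zero hj)
    rw [h_a 0 (by decide), h_a 1 (by decide), h_a 6 (by decide)]
    simp only [hK.inner_emb_self, mulVec_single_one, dotProduct_single, col_apply, mul_one,
      inner7_eq_dotProduct, zero_dotProduct, zero_add]
    change trace (MX A B C Z) = 0
    rw [trace_MX, htA, htB, htC]
    ring

end Connection

lemma phi_add_left (X X' Y Z : Fin 7 → ℝ) : phi (X + X') Y Z = phi X Y Z + phi X' Y Z := by
  simp only [phi, w3, det_fin_three]; simp; ring

lemma phi_add_mid (X Y Y' Z : Fin 7 → ℝ) : phi X (Y + Y') Z = phi X Y Z + phi X Y' Z := by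
  simp only [phi, w3, det_fin_three]; simp; ring

lemma phi_add_right (X Y Z Z' : Fin 7 → ℝ) : phi X Y (Z + Z') = phi X Y Z + phi X Y Z' := by
  simp only [phi, w3, det_fin_three]; simp; ring

set_option maxHeartbeats 400000 in
lemma exists_psi_eq_apply (j : Fin 7) : ∃ Y Z W : Fin 7 → ℝ, ∀ V, psi V Y Z W = V j := by
  fin_cases j <;>
    [refine ⟨E 1, E 4, E 5, fun V => ?_⟩; refine ⟨-E 0, E 4, E 5, fun V => ?_⟩;
      refine ⟨E 3, E 4, E 5, fun V => ?_⟩; refine ⟨-E 2, E 4, E 5, fun V => ?_⟩;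
      refine ⟨E 2, E 3, E 5, fun V => ?_⟩; refine ⟨-E 2, E 3, E 4, fun V => ?_⟩;
      refine ⟨-E 0, E 2, E 5, fun V => ?_⟩] <;>
    simp [psi, w4, det_succ_row_zero, Fin.sum_univ_succ, E, Fin.succAbove] <;> ring

section Torsion

variable {A B C : Matrix (Fin 4) (Fin 4) ℝ} {nabla : (Fin 7 → ℝ) → (Fin 7 → ℝ) → (Fin 7 → ℝ)}
  {T : (Fin 7 → ℝ) → (Fin 7 → ℝ)}

lemma IsFullTorsion.map_add (hT : IsFullTorsion nabla T)
    (hadd : ∀ X X' Y, nabla (X + X') Y = nabla X Y + nabla X' Y) (X X' : Fin 7 → ℝ) :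
    T (X + X') = T X + T X' := by
  funext j
  obtain ⟨Y, Z, W, hV⟩ := exists_psi_eq_apply j
  rw [Pi.add_apply, ← hV (T (X + X')), ← hV (T X), ← hV (T X'), ← hT, ← hT, ← hT, hadd, hadd,
    hadd, phi_add_left, phi_add_mid, phi_add_right]
  ring

lemma sum_Tbil_nabla_E_self_eq_zero (hK : IsKoszul A B C nabla) (hT : IsFullTorsion nabla T)
    (htA : trace A = 0) (htB : trace B = 0) (htC : trace C = 0) (j : Fin 7) :
    ∑ i, Tbil T (nabla (E i) (E i)) (E j) = 0 := by
  let Tₗ : (Fin 7 → ℝ) →+ (Fin 7 → ℝ) := AddMonoidHom.mk' T (hT.map_add hK.add_left)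
  have hsum : ∑ i, T (nabla (E i) (E i)) = 0 :=
    calc ∑ i, T (nabla (E i) (E i)) = Tₗ (∑ i, nabla (E i) (E i)) := (map_sum Tₗ _ _).symm
      _ = 0 := by rw [hK.sum_nabla_E_self_eq_zero htA htB htC, map_zero]
  simpa only [Tbil, inner7_E, Finset.sum_apply, Pi.zero_apply] using congrFun hsum j

lemma inner7_divT_of_nPart_eq_zero (hK : IsKoszul A B C nabla) {j : Fin 7}
    (hj : nPart (E j) = 0) (hcenter : ∑ i, Tbil T (nabla (E i) (E i)) (E j) = 0) :
    inner7 (divT nabla T) (E j)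
      = ∑ k : Fin 4, Tbil T (emb (Pi.single k 1))
          (emb (symPart (MX A B C (E j)) *ᵥ Pi.single k 1)) := by
  have h_a : ∀ i : Fin 7, i.val < 2 ∨ i.val = 6 → nabla (E i) (E j) = 0 := fun i hi =>
    hK.eq_zero_of_nPart (nPart_E_eq_zero hi) hj
  rw [inner7_E, divT, hcenter, sum_E_eq_add_sum_emb fun X => Tbil T X (nabla X (E j)),
    h_a 0 (by decide), h_a 1 (by decide), h_a 6 (by decide)]
  simp [hK.emb_left _ hj, Tbil, inner7_eq_dotProduct]

end Torsion

theorem divT_formula_general (A B C : Matrix (Fin 4) (Fin 4) ℝ)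
    (htA : Matrix.trace A = 0) (htB : Matrix.trace B = 0) (htC : Matrix.trace C = 0)
    (nabla : (Fin 7 → ℝ) → (Fin 7 → ℝ) → (Fin 7 → ℝ))
    (hK : IsKoszul A B C nabla)
    (T : (Fin 7 → ℝ) → (Fin 7 → ℝ)) (hT : IsFullTorsion nabla T) :
    (∀ j : Fin 7, ∑ i, Tbil T (nabla (E i) (E i)) (E j) = 0) ∧
    inner7 (divT nabla T) (E 0)
      = ∑ i : Fin 4, Tbil T (emb (Pi.single i 1)) (emb ((symPart B).mulVec (Pi.single i 1))) ∧
    inner7 (divT nabla T) (E 1)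
      = ∑ i : Fin 4, Tbil T (emb (Pi.single i 1)) (emb ((symPart C).mulVec (Pi.single i 1))) ∧
    inner7 (divT nabla T) (E 6)
      = ∑ i : Fin 4, Tbil T (emb (Pi.single i 1)) (emb ((symPart A).mulVec (Pi.single i 1))) := by
  have hcenter := sum_Tbil_nabla_E_self_eq_zero hK hT htA htB htC
  have hdiv : ∀ j : Fin 7, j.val < 2 ∨ j.val = 6 → inner7 (divT nabla T) (E j)
      = ∑ k : Fin 4, Tbil T (emb (Pi.single k 1))
          (emb (symPart (MX A B C (E j)) *ᵥ Pi.single k 1)) := fun j hj =>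
    inner7_divT_of_nPart_eq_zero hK (nPart_E_eq_zero hj) (hcenter j)
  refine ⟨hcenter, ?_, ?_, ?_⟩
  · simpa [MX, E] using hdiv 0 (by decide)
  · simpa [MX, E] using hdiv 1 (by decide)
  · simpa [MX, E] using hdiv 6 (by decide)

/-- `∑ᵢ T(∇_{e_i}e_i, e_j) = 0` for every `j`, and for
`j ∈ {1,2,7}` (indices `0,1,6` here) one has
`⟨div T, e_j⟩ = ∑_{i=3}^{6} T(e_i, S(Dʲ)e_i)` with `D¹ = B`, `D² = C`, `D⁷ = A`. -/
theorem divT_formula (A B C : Matrix (Fin 4) (Fin 4) ℝ)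
    (hAB : A * B = B * A) (hAC : A * C = C * A) (hBC : B * C = C * B)
    (htA : Matrix.trace A = 0) (htB : Matrix.trace B = 0) (htC : Matrix.trace C = 0)
    (nabla : (Fin 7 → ℝ) → (Fin 7 → ℝ) → (Fin 7 → ℝ))
    (hK : IsKoszul A B C nabla)
    (T : (Fin 7 → ℝ) → (Fin 7 → ℝ)) (hT : IsFullTorsion nabla T) :
    (∀ j : Fin 7, ∑ i, Tbil T (nabla (E i) (E i)) (E j) = 0) ∧
    inner7 (divT nabla T) (E 0)
      = ∑ i : Fin 4, Tbil T (emb (Pi.single i 1)) (emb ((symPart B).mulVec (Pi.single i 1))) ∧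
    inner7 (divT nabla T) (E 1)
      = ∑ i : Fin 4, Tbil T (emb (Pi.single i 1)) (emb ((symPart C).mulVec (Pi.single i 1))) ∧
    inner7 (divT nabla T) (E 6)
      = ∑ i : Fin 4, Tbil T (emb (Pi.single i 1)) (emb ((symPart A).mulVec (Pi.single i 1))) :=
  divT_formula_general A B C htA htB htC nabla hK T hT
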